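/- For k > 0, the X_1-Laguerre polynomials L̂_m^k and L̂_n^k with m ≠ n (m,n ≥ 1) are orthogonal: ∫_0^∞ L̂_m^k(x) L̂_n^k(x) e^{-x} x^k (x+k)^{-2} dx = 0. -/

import Mathlib

open MeasureTheory Polynomial

/-- Classical generalized Laguerre polynomials L_n^{(k)}, defined by the
three-term recurrence (n+2) L_{n+2} = (2n+k+3 - x) L_{n+1} - (n+1+k) L_n,
with L_0 = 1, L_1 = k + 1 - x. -/
noncomputable def genLaguerre (k : ℝ) : ℕ → Polynomial ℝ
  | 0 => 1
  | 1 => Polynomial.C (k + 1) - Polynomial.X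
  | n + 2 =>
      Polynomial.C (1 / ((n : ℝ) + 2)) *
        ((Polynomial.C (2 * (n : ℝ) + k + 3) - Polynomial.X) * genLaguerre k (n + 1)
          - Polynomial.C ((n : ℝ) + 1 + k) * genLaguerre k n)

/-- X₁-Laguerre polynomial L̂_n^k = -(x+k+1) L_{n-1}^{(k)} + L_{n-2}^{(k)},
with the convention L_{-1}^{(k)} = 0 (so the last term is absent for n = 1). -/
noncomputable def hatL (k : ℝ) (n : ℕ) : Polynomial ℝ :=
  -(Polynomial.X + Polynomial.C (k + 1)) * genLaguerre k (n - 1)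
    + if 2 ≤ n then genLaguerre k (n - 2) else 0

/-!
The polynomials `L̂_n^k` (`n ≥ 1`) are eigenfunctions of one second-order operator:
`x(x+k) y'' + (k² + k - x - x²) y' + (x - k) y = -(n-1)(x+k) y`, which follows from the classical
relations `x L'_{n+1} = (n+1) L_{n+1} - (n+1+k) L_n` and `L'_{n+1} = L'_n - L_n`. With
`w(x) = e^{-x} x^k (x+k)^{-2}`, the function `p(x) = x w(x)` satisfies
`x(x+k) p' = (k² + k - x - x²) p`, so the operator is self-adjoint for the weight `w`: for the
Wronskian `W` of `L̂_m^k, L̂_n^k`, Lagrange's identity gives `(p W)' = (m - n) L̂_m^k L̂_n^k w`.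
Since `p W` vanishes at `0` and at `∞`, integrating over `(0, ∞)` gives the orthogonality.
-/

open Filter Topology Set

lemma genLaguerre_zero (k : ℝ) : genLaguerre k 0 = 1 := rfl

lemma genLaguerre_one (k : ℝ) : genLaguerre k 1 = C (k + 1) - X := rfl

lemma genLaguerre_add_two (k : ℝ) (n : ℕ) :
    C ((n : ℝ) + 2) * genLaguerre k (n + 2) =
      (C (2 * (n : ℝ) + k + 3) - X) * genLaguerre k (n + 1)
        - C ((n : ℝ) + 1 + k) * genLaguerre k n := by
  rw [genLaguerre, ← mul_assoc, ← C_mul, mul_one_div_cancel (by positivity), C_1, one_mul]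

lemma X_mul_derivative_genLaguerre_succ (k : ℝ) : ∀ n : ℕ,
    X * derivative (genLaguerre k (n + 1)) =
      C ((n : ℝ) + 1) * genLaguerre k (n + 1) - C ((n : ℝ) + 1 + k) * genLaguerre k n
  | 0 => by
    simp only [genLaguerre_zero, genLaguerre_one, Nat.cast_zero, zero_add, derivative_sub,
      derivative_C, derivative_X, derivative_one, map_add, map_one]
    ring
  | 1 => by
    have hrec := genLaguerre_add_two k 0
    have hrec' := congrArg derivative hrec
    apply mul_left_cancel₀ (C_ne_zero.mpr two_ne_zero)
    simp only [Nat.reduceAdd, Nat.cast_zero, Nat.cast_one, zero_add, genLaguerre_zero,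
      genLaguerre_one, derivative_mul, derivative_sub, derivative_C, derivative_X, derivative_one,
      derivative_ofNat, map_add, map_one, map_ofNat, map_mul, map_zero] at hrec hrec' ⊢
    linear_combination X * hrec' - 2 * hrec
  | n + 2 => by
    have hrec := genLaguerre_add_two k (n + 1)
    have hrec₀ := genLaguerre_add_two k n
    have hrec' := congrArg derivative hrec
    have ih₁ := X_mul_derivative_genLaguerre_succ k (n + 1)
    have ih₀ := X_mul_derivative_genLaguerre_succ k n
    apply mul_left_cancel₀ (C_ne_zero.mpr (by positivity : (n : ℝ) + 3 ≠ 0))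
    simp only [add_assoc, Nat.reduceAdd, Nat.cast_add, Nat.cast_one, Nat.cast_ofNat,
      derivative_mul, derivative_sub, derivative_C, derivative_X, derivative_one,
      derivative_natCast, derivative_ofNat, map_add, map_one, map_ofNat, map_mul, map_natCast]
      at hrec hrec₀ hrec' ih₁ ih₀ ⊢
    linear_combination X * hrec' + (2 * (n : ℝ[X]) + C k + 5 - X) * ih₁
      - ((n : ℝ[X]) + 2 + C k) * ih₀ - ((n : ℝ[X]) + 3) * hrec + ((n : ℝ[X]) + 2 + C k) * hrec₀

lemma derivative_genLaguerre_succ (k : ℝ) : ∀ n : ℕ,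
    derivative (genLaguerre k (n + 1)) = derivative (genLaguerre k n) - genLaguerre k n
  | 0 => by simp [genLaguerre_zero, genLaguerre_one]
  | n + 1 => by
    have hrec' := congrArg derivative (genLaguerre_add_two k n)
    have ih := derivative_genLaguerre_succ k n
    have hX := X_mul_derivative_genLaguerre_succ k n
    apply mul_left_cancel₀ (C_ne_zero.mpr (by positivity : (n : ℝ) + 2 ≠ 0))
    simp only [add_assoc, Nat.reduceAdd, derivative_mul, derivative_sub, derivative_C,
      derivative_X, derivative_one, derivative_natCast, derivative_ofNat, map_add, map_one,
      map_ofNat, map_mul, map_natCast] at hrec' ih hX ⊢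
    linear_combination hrec' + ((n : ℝ[X]) + 1 + C k) * ih - hX

lemma hatL_ode (k : ℝ) {n : ℕ} (hn : 1 ≤ n) :
    X * (X + C k) * derivative (derivative (hatL k n))
      + (C (k ^ 2 + k) - X - X ^ 2) * derivative (hatL k n)
      + (X - C k + C ((n : ℝ) - 1) * (X + C k)) * hatL k n = 0 := by
  obtain _ | _ | n := n
  · omega
  · have hy : hatL k 1 = -(X + C (k + 1)) := by simp [hatL, genLaguerre_zero]
    rw [hy]
    simp only [zero_add, Nat.cast_one, sub_self, map_zero, zero_mul, add_zero, derivative_neg,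
      derivative_X, derivative_C, derivative_one, map_add, map_one, map_pow]
    ring
  · have hy : hatL k (n + 2) = -(X + C (k + 1)) * genLaguerre k (n + 1) + genLaguerre k n := by
      simp [hatL]
    have hX := X_mul_derivative_genLaguerre_succ k n
    have hD := derivative_genLaguerre_succ k n
    have hX' := congrArg derivative hX
    have hD' := congrArg derivative hD
    rw [hy]
    simp only [add_assoc, Nat.reduceAdd, Nat.cast_add, Nat.cast_ofNat, derivative_mul,
      derivative_neg, derivative_C, derivative_X, derivative_one, derivative_zero,
      derivative_natCast, map_add, map_one, map_ofNat, map_sub, map_natCast, map_pow]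
      at hX hD hX' hD' ⊢
    linear_combination ((X + C k) * (X + C k + 1)) * hX
      + ((X - C k) * (X + C k + 1) - ((n : ℝ[X]) + 1 + C k) * (X + C k) ^ 2
          - X * (X + C k)) * hD
      - (X + C k) ^ 2 * hX' - X * (X + C k) * hD'

lemma mul_derivative_wronskian_add_mul_wronskian {R : Type*} [CommRing R]
    {a b c d P Q : R[X]}
    (hP : a * derivative (derivative P) + b * derivative P + c * P = 0)
    (hQ : a * derivative (derivative Q) + b * derivative Q + d * Q = 0) :
    a * derivative (wronskian P Q) + b * wronskian P Q = (c - d) * P * Q := by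
  simp only [wronskian, derivative_mul, derivative_sub]
  linear_combination P * hQ - Q * hP

noncomputable def x1LaguerreWeight (k x : ℝ) : ℝ :=
  Real.exp (-x) * x ^ k * ((x + k) ^ 2)⁻¹

lemma integrableOn_eval_mul_exp_neg_mul_rpow (P : ℝ[X]) {s : ℝ} (hs : -1 < s) :
    IntegrableOn (fun x => P.eval x * (Real.exp (-x) * x ^ s)) (Ioi 0) := by
  induction P using Polynomial.induction_on' with
  | add p q hp hq =>
    refine IntegrableOn.congr_fun (hp.add hq) (fun x _ => ?_) measurableSet_Ioi
    simp only [Pi.add_apply, eval_add, add_mul]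
  | monomial j a =>
    have hΓ : IntegrableOn (fun x => a * (Real.exp (-x) * x ^ (s + j + 1 - 1))) (Ioi 0) :=
      (Real.GammaIntegral_convergent (by linarith [j.cast_nonneg (α := ℝ)])).const_mul a
    refine hΓ.congr_fun (fun x (hx : 0 < x) => ?_) measurableSet_Ioi
    simp only [eval_monomial, add_sub_cancel_right, Real.rpow_add hx, Real.rpow_natCast]
    ring

lemma tendsto_eval_mul_exp_neg_mul_rpow (P : ℝ[X]) (s : ℝ) :
    Tendsto (fun x => P.eval x * (Real.exp (-x) * x ^ s)) atTop (𝓝 0) := by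
  induction P using Polynomial.induction_on' with
  | add p q hp hq => simpa only [eval_add, add_mul, add_zero] using hp.add hq
  | monomial j a =>
    have hlim := (tendsto_rpow_mul_exp_neg_mul_atTop_nhds_zero (s + j) 1 one_pos).const_mul a
    rw [mul_zero] at hlim
    refine hlim.congr' ?_
    filter_upwards [eventually_gt_atTop 0] with x hx
    rw [eval_monomial, Real.rpow_add hx, Real.rpow_natCast, neg_one_mul]
    ring

lemma integrableOn_eval_mul_x1LaguerreWeight (P : ℝ[X]) {k : ℝ} (hk : 0 < k) :
    IntegrableOn (fun x => P.eval x * x1LaguerreWeight k x) (Ioi 0) := by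
  have hbound : ∀ᵐ x ∂(volume.restrict (Ioi (0 : ℝ))), ‖((x + k) ^ 2)⁻¹‖ ≤ (k ^ 2)⁻¹ := by
    refine (ae_restrict_iff' measurableSet_Ioi).2 (Eventually.of_forall fun x (hx : 0 < x) => ?_)
    rw [Real.norm_of_nonneg (by positivity)]
    gcongr
    linarith
  have := (integrableOn_eval_mul_exp_neg_mul_rpow P (by linarith : -1 < k)).mul_bdd
    (by fun_prop) hbound
  unfold IntegrableOn
  simpa only [x1LaguerreWeight, mul_assoc] using this

lemma tendsto_eval_mul_x1LaguerreWeight (P : ℝ[X]) (k : ℝ) :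
    Tendsto (fun x => P.eval x * x1LaguerreWeight k x) atTop (𝓝 0) := by
  have hinv : Tendsto (fun x : ℝ => ((x + k) ^ 2)⁻¹) atTop (𝓝 0) :=
    tendsto_inv_atTop_zero.comp
      ((tendsto_pow_atTop two_ne_zero).comp (tendsto_atTop_add_const_right _ k tendsto_id))
  simpa only [x1LaguerreWeight, mul_assoc, mul_zero] using
    (tendsto_eval_mul_exp_neg_mul_rpow P k).mul hinv

lemma hasDerivAt_mul_x1LaguerreWeight {k x : ℝ} (hx : 0 < x) (hxk : x + k ≠ 0) :
    HasDerivAt (fun y => y * x1LaguerreWeight k y)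
      (x1LaguerreWeight k x * (k ^ 2 + k - x - x ^ 2) / (x + k)) x := by
  have hexp : HasDerivAt (fun y => Real.exp (-y)) (-Real.exp (-x)) x := by
    simpa using (hasDerivAt_neg x).exp
  have hpow := Real.hasDerivAt_rpow_const (p := k) (Or.inl hx.ne')
  have hinv := (((hasDerivAt_id' x).add_const k).fun_pow 2).fun_inv (pow_ne_zero 2 hxk)
  refine ((hasDerivAt_id' x).fun_mul ((hexp.fun_mul hpow).fun_mul hinv)).congr_deriv ?_
  simp only [x1LaguerreWeight, Real.rpow_sub_one hx.ne']
  field_simp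
  ring

lemma integral_eval_mul_x1LaguerreWeight_eq_zero {k : ℝ} (hk : 0 < k) (A B : ℝ[X])
    (h : X * (X + C k) * derivative A + (C (k ^ 2 + k) - X - X ^ 2) * A = (X + C k) * B) :
    ∫ x in Ioi 0, B.eval x * x1LaguerreWeight k x = 0 := by
  set g : ℝ → ℝ := fun y => y * x1LaguerreWeight k y * A.eval y
  have hcont : ContinuousWithinAt g (Ici 0) 0 := by
    have : ContinuousAt (fun y : ℝ => y ^ k) 0 := Real.continuousAt_rpow_const 0 k (Or.inr hk.le)
    refine ContinuousAt.continuousWithinAt ?_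
    simp only [g, x1LaguerreWeight]
    fun_prop (disch := simp [hk.ne'])
  have hderiv : ∀ x ∈ Ioi (0 : ℝ), HasDerivAt g (B.eval x * x1LaguerreWeight k x) x := by
    intro x (hx : 0 < x)
    have hxk : x + k ≠ 0 := by positivity
    refine ((hasDerivAt_mul_x1LaguerreWeight hx hxk).fun_mul (A.hasDerivAt x)).congr_deriv ?_
    have hx' := congrArg (eval x) h
    simp only [eval_mul, eval_add, eval_sub, eval_pow, eval_X, eval_C] at hx'
    field_simp
    linear_combination x1LaguerreWeight k x * hx'
  have hlim : Tendsto g atTop (𝓝 0) := by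
    refine (tendsto_eval_mul_x1LaguerreWeight (X * A) k).congr fun x => ?_
    simp only [g, eval_mul, eval_X]
    ring
  simpa [g] using integral_Ioi_of_hasDerivAt_of_tendsto hcont hderiv
    (integrableOn_eval_mul_x1LaguerreWeight B hk) hlim

/-- For k > 0 and m ≠ n (m,n ≥ 1), the X₁-Laguerre polynomials
are orthogonal: ∫₀^∞ L̂_m^k L̂_n^k e^{-x} x^k (x+k)^{-2} dx = 0. -/
theorem stmt_16 (k : ℝ) (hk : 0 < k) (m n : ℕ) (hm : 1 ≤ m) (hn : 1 ≤ n)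
    (hmn : m ≠ n) :
    ∫ x in Set.Ioi (0 : ℝ),
        (hatL k m).eval x * (hatL k n).eval x *
          (Real.exp (-x) * x ^ k * ((x + k) ^ 2)⁻¹) = 0 := by
  have hW := mul_derivative_wronskian_add_mul_wronskian (hatL_ode k hm) (hatL_ode k hn)
  have hsl : X * (X + C k) * derivative (wronskian (hatL k m) (hatL k n))
      + (C (k ^ 2 + k) - X - X ^ 2) * wronskian (hatL k m) (hatL k n)
      = (X + C k) * (C ((m : ℝ) - n) * (hatL k m * hatL k n)) := by
    rw [hW, map_sub, map_sub, map_sub]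
    ring
  have h := integral_eval_mul_x1LaguerreWeight_eq_zero hk _ _ hsl
  simp only [eval_mul, eval_C, mul_assoc, integral_const_mul] at h
  have hmn' : (m : ℝ) - n ≠ 0 := sub_ne_zero.mpr (Nat.cast_injective.ne hmn)
  simpa only [x1LaguerreWeight, mul_assoc] using (mul_eq_zero.mp h).resolve_left hmn'
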